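/- Let p be a prime, ε ∈ (ℤ/p)^* of multiplicative order t, and F = ∏_i Φ_{d_i} a product of cyclotomic polynomials of total degree d = ∑_i φ(d_i). Then the multiplicity of ε as a root of the reduction of F modulo p is at most d/φ(t). -/

import Mathlib

/-!
Write `m = p ^ k * m'` with `p ∤ m'`. In characteristic `p` one has
`Φ_m = Φ_{m'} ^ φ(p ^ k)`, and `Φ_{m'}` is separable with roots exactly the primitive
`m'`-th roots of unity. Hence `ζ` can be a root of `Φ_m` only if its order is `m'`, and then
its multiplicity is `φ(p ^ k) = φ(m) / φ(m')`. Summing over the factors of `F` gives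
`mult_ε(F) * φ(t) ≤ d`.
-/

open Polynomial

namespace Polynomial

variable {R : Type*} [CommRing R] [IsDomain R]

theorem rootMultiplicity_prod {ι : Type*} (s : Finset ι) (f : ι → R[X])
    (hf : ∏ i ∈ s, f i ≠ 0) (a : R) :
    rootMultiplicity a (∏ i ∈ s, f i) = ∑ i ∈ s, rootMultiplicity a (f i) := by
  classical
  simp only [← count_roots, roots_prod f s hf, Multiset.count_bind, Finset.sum_eq_multiset_sum]

theorem rootMultiplicity_pow (f : R[X]) (n : ℕ) (a : R) :
    rootMultiplicity a (f ^ n) = n * rootMultiplicity a f := by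
  classical
  simp only [← count_roots, roots_pow, Multiset.count_nsmul]

end Polynomial

theorem Nat.totient_prime_pow_eq_sub {p k : ℕ} (hp : p.Prime) (hk : 0 < k) :
    Nat.totient (p ^ k) = p ^ k - p ^ (k - 1) := by
  obtain ⟨j, rfl⟩ : ∃ j, k = j + 1 := ⟨k - 1, by omega⟩
  rw [Nat.totient_prime_pow_succ hp, Nat.mul_sub_one, pow_succ, Nat.add_sub_cancel]

namespace Polynomial

variable {K : Type*} [Field K]

theorem rootMultiplicity_cyclotomic_mul_totient_orderOf_le_of_neZero (n : ℕ) [NeZero (n : K)]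
    (ζ : K) : rootMultiplicity ζ (cyclotomic n K) * Nat.totient (orderOf ζ) ≤ Nat.totient n := by
  by_cases hroot : (cyclotomic n K).IsRoot ζ
  · rw [← (isRoot_cyclotomic_iff.mp hroot).eq_orderOf]
    exact mul_le_of_le_one_left (Nat.zero_le _)
      (rootMultiplicity_le_one_of_separable (separable_cyclotomic n K) ζ)
  · simp [rootMultiplicity_eq_zero hroot]

theorem rootMultiplicity_cyclotomic_mul_totient_orderOf_le (p : ℕ) [Fact p.Prime] [CharP K p]
    (m : ℕ) (ζ : K) :
    rootMultiplicity ζ (cyclotomic m K) * Nat.totient (orderOf ζ) ≤ Nat.totient m := by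
  rcases eq_or_ne m 0 with rfl | hm
  · simp
  have hp : p.Prime := Fact.out
  obtain ⟨k, m', hpm', rfl⟩ := Nat.exists_eq_pow_mul_and_not_dvd hm p hp.ne_one
  have : NeZero (m' : K) := ⟨(CharP.cast_eq_zero_iff K p m').not.mpr hpm'⟩
  have hcoprime := rootMultiplicity_cyclotomic_mul_totient_orderOf_le_of_neZero m' ζ
  rcases k.eq_zero_or_pos with rfl | hk
  · simpa using hcoprime
  rw [cyclotomic_mul_prime_pow_eq K hpm' hk, rootMultiplicity_pow, mul_assoc,
    Nat.totient_mul (Nat.Coprime.pow_left _ (hp.coprime_iff_not_dvd.mpr hpm')),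
    Nat.totient_prime_pow_eq_sub hp hk]
  exact Nat.mul_le_mul_left _ hcoprime

theorem rootMultiplicity_prod_cyclotomic_mul_totient_orderOf_le (p : ℕ) [Fact p.Prime]
    [CharP K p] {ι : Type*} (s : Finset ι) (m : ι → ℕ) (ζ : K) :
    rootMultiplicity ζ (∏ i ∈ s, cyclotomic (m i) K) * Nat.totient (orderOf ζ) ≤
      ∑ i ∈ s, Nat.totient (m i) := by
  rw [rootMultiplicity_prod _ _ (Finset.prod_ne_zero_iff.mpr fun i _ => cyclotomic_ne_zero _ K),
    Finset.sum_mul]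
  exact Finset.sum_le_sum fun i _ => rootMultiplicity_cyclotomic_mul_totient_orderOf_le p (m i) ζ

end Polynomial

theorem rootMultiplicity_prod_cyclotomic_le_general (p t : ℕ) (hp : p.Prime)
    (ε : (ZMod p)ˣ) (ht : orderOf ε = t)
    {ι : Type*} (s : Finset ι) (dd : ι → ℕ)
    (F : Polynomial ℤ) (hF : F = ∏ i ∈ s, cyclotomic (dd i) ℤ)
    (d : ℕ) (hd : d = ∑ i ∈ s, Nat.totient (dd i)) :
    (F.map (Int.castRingHom (ZMod p))).rootMultiplicity (ε : ZMod p) ≤ d / Nat.totient t := by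
  have : Fact p.Prime := ⟨hp⟩
  have hmap : F.map (Int.castRingHom (ZMod p)) = ∏ i ∈ s, cyclotomic (dd i) (ZMod p) := by
    simp only [hF, Polynomial.map_prod, map_cyclotomic_int]
  have htotient : 0 < Nat.totient t := Nat.totient_pos.mpr (ht ▸ orderOf_pos ε)
  rw [hmap, hd, Nat.le_div_iff_mul_le htotient, ← ht, ← orderOf_units]
  exact rootMultiplicity_prod_cyclotomic_mul_totient_orderOf_le p s dd (ε : ZMod p)

/-- Let `ε ∈ (ℤ/p)ˣ` have order `t` and `F = ∏ i, Φ_{d i}` a product of cyclotomic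
polynomials of total degree `d = ∑ i, φ (d i)`.  The multiplicity of `ε` as a root of the
reduction of `F` mod `p` is at most `d / φ(t)`. -/
theorem rootMultiplicity_prod_cyclotomic_le (p t : ℕ) (hp : p.Prime)
    (ε : (ZMod p)ˣ) (ht : orderOf ε = t)
    {ι : Type*} (s : Finset ι) (dd : ι → ℕ) (hdd : ∀ i ∈ s, 0 < dd i)
    (F : Polynomial ℤ) (hF : F = ∏ i ∈ s, cyclotomic (dd i) ℤ)
    (d : ℕ) (hd : d = ∑ i ∈ s, Nat.totient (dd i)) :
    (F.map (Int.castRingHom (ZMod p))).rootMultiplicity (ε : ZMod p) ≤ d / Nat.totient t :=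
  rootMultiplicity_prod_cyclotomic_le_general p t hp ε ht s dd F hF d hd
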